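/- arXiv:1612.05190 — 3 statements merged into one kernel-verified Lean document; each statement's English description precedes it below -/
import Mathlib

section
/- Let g : ℝᵐ → ℝ ∪ {+∞} be convex and lower semicontinuous, let F : ℝⁿ → ℝᵐ have continuously differentiable components, let x̄ ∈ ℝⁿ satisfy F(x̄) ∈ int(dom g), let Δ̄ > 0, and let {F̃_Δ : Δ ∈ (0, Δ̄)} be fully linear models of F at x̄ with constants κ_F > 0 and κ_G > 0. Define f = g ∘ F and f̃_Δ = g ∘ F̃_Δ. Then there exist κ_f > 0 and Δ̄_f > 0 such that for every Δ ∈ (0, Δ̄_f) and every y in the open ball B_Δ(x̄), both f(y) and f̃_Δ(y) are finite and |f(y) − f̃_Δ(y)| ≤ κ_f Δ². -/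
/-!
A proper convex function is locally Lipschitz on the interior of its domain, say with constant
`K` on a ball around `F x̄`. Componentwise model errors `κF Δ²` give a Euclidean error
`√m κF Δ²`, so for small `Δ` continuity of `F` keeps both `F y` and `F̃_Δ y` in that ball for
every `y ∈ B_Δ(x̄)`, and then `|f y - f̃_Δ y| ≤ K √m κF Δ²`.
-/

open Metric Set Filter Topology

theorem convexOn_toReal_of_convex_epigraph {E : Type*} [AddCommGroup E] [Module ℝ E]
    {g : E → EReal} (hbot : ∀ z, g z ≠ ⊥)
    (hconv : Convex ℝ {p : E × ℝ | g p.1 ≤ (p.2 : EReal)}) :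
    ConvexOn ℝ {z | g z < ⊤} (fun z => (g z).toReal) := by
  have mem_epigraph : ∀ z, g z < ⊤ → (z, (g z).toReal) ∈ {p : E × ℝ | g p.1 ≤ (p.2 : EReal)} :=
    fun z hz => by simp [EReal.coe_toReal hz.ne (hbot z)]
  have combination_le : ∀ ⦃z₁⦄, g z₁ < ⊤ → ∀ ⦃z₂⦄, g z₂ < ⊤ → ∀ ⦃a b : ℝ⦄, 0 ≤ a → 0 ≤ b →
      a + b = 1 → g (a • z₁ + b • z₂) ≤ ((a * (g z₁).toReal + b * (g z₂).toReal : ℝ) : EReal) :=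
    fun z₁ h₁ z₂ h₂ _ _ ha hb hab => hconv (mem_epigraph z₁ h₁) (mem_epigraph z₂ h₂) ha hb hab
  refine ⟨fun _ h₁ _ h₂ _ _ ha hb hab => ?_, fun _ h₁ _ h₂ _ _ ha hb hab => ?_⟩
  · exact (combination_le h₁ h₂ ha hb hab).trans_lt (EReal.coe_lt_top _)
  · exact (EReal.toReal_le_toReal (combination_le h₁ h₂ ha hb hab) (hbot _)
      (EReal.coe_ne_top _)).trans_eq (EReal.toReal_coe _)

theorem LocallyLipschitzOn.exists_lipschitzOnWith_ball {X Y : Type*} [PseudoMetricSpace X]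
    [PseudoEMetricSpace Y] {s : Set X} {f : X → Y} {x : X} (hf : LocallyLipschitzOn s f)
    (hs : IsOpen s) (hx : x ∈ s) :
    ∃ (K : NNReal) (ε : ℝ), 0 < ε ∧ ball x ε ⊆ s ∧ LipschitzOnWith K f (ball x ε) := by
  obtain ⟨K, t, ht, hlip⟩ := hf hx
  rw [hs.nhdsWithin_eq hx] at ht
  obtain ⟨ε, hε, hball⟩ := Metric.mem_nhds_iff.1 (inter_mem ht (hs.mem_nhds hx))
  exact ⟨K, ε, hε, fun _ hz => (hball hz).2, hlip.mono fun _ hz => (hball hz).1⟩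

theorem EuclideanSpace.dist_le_sqrt_card_mul {ι : Type*} [Fintype ι]
    {x y : EuclideanSpace ℝ ι} {c : ℝ} (hc : 0 ≤ c) (h : ∀ i, dist (x i) (y i) ≤ c) :
    dist x y ≤ √(Fintype.card ι) * c := by
  calc dist x y
      = √(∑ i, dist (x i) (y i) ^ 2) := EuclideanSpace.dist_eq x y
    _ ≤ √(∑ _ : ι, c ^ 2) := by gcongr with i; exact h i
    _ = √(Fintype.card ι) * c := by simp [Real.sqrt_mul, Real.sqrt_sq hc]

theorem eventually_mem_ball_of_dist_le_mul_sq {X Y : Type*} [PseudoMetricSpace X]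
    [PseudoMetricSpace Y] {Φ : X → Y} {Ψ : ℝ → X → Y} {x : X} {c ε : ℝ}
    (hΦ : ContinuousAt Φ x) (hε : 0 < ε)
    (hΨ : ∀ᶠ Δ in 𝓝[>] 0, ∀ y ∈ ball x Δ, dist (Φ y) (Ψ Δ y) ≤ c * Δ ^ 2) :
    ∀ᶠ Δ in 𝓝[>] 0, ∀ y ∈ ball x Δ, Φ y ∈ ball (Φ x) ε ∧ Ψ Δ y ∈ ball (Φ x) ε := by
  obtain ⟨δ, hδ, hΦδ⟩ := Metric.continuousAt_iff.1 hΦ (ε / 2) (half_pos hε)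
  have hsmall : ∀ᶠ Δ in 𝓝[>] (0 : ℝ), c * Δ ^ 2 < ε / 2 := by
    have hcont : Continuous fun Δ : ℝ => c * Δ ^ 2 := by fun_prop
    exact ((hcont.tendsto' 0 0 (by simp)).mono_left nhdsWithin_le_nhds).eventually_lt_const
      (half_pos hε)
  filter_upwards [hΨ, hsmall, Ioo_mem_nhdsGT hδ] with Δ hclose hcΔ hΔ y hy
  have hΦy : dist (Φ y) (Φ x) < ε / 2 := hΦδ ((mem_ball.1 hy).trans hΔ.2)
  refine ⟨mem_ball.2 (by linarith), mem_ball.2 ?_⟩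
  calc dist (Ψ Δ y) (Φ x) ≤ dist (Φ y) (Ψ Δ y) + dist (Φ y) (Φ x) := dist_triangle_left _ _ _
    _ < ε := by linarith [hclose y hy]

theorem function_value_approximation_general {n m : ℕ}
    (g : EuclideanSpace ℝ (Fin m) → EReal)
    (hgbot : ∀ z, g z ≠ ⊥)
    (hconv : Convex ℝ {p : EuclideanSpace ℝ (Fin m) × ℝ | g p.1 ≤ (p.2 : EReal)})
    (F : Fin m → EuclideanSpace ℝ (Fin n) → ℝ)
    (hF : ∀ i, ContDiff ℝ 1 (F i))
    (xbar : EuclideanSpace ℝ (Fin n))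
    (hdom : (WithLp.toLp 2 (fun i => F i xbar) : EuclideanSpace ℝ (Fin m)) ∈ interior {z | g z < ⊤})
    (Δbar κF κG : ℝ) (hΔbar : 0 < Δbar) (hκF : 0 < κF)
    (Ft : ℝ → Fin m → EuclideanSpace ℝ (Fin n) → ℝ)
    (hfl : ∀ Δ ∈ Ioo (0:ℝ) Δbar, ∀ i, ∀ y ∈ ball xbar Δ,
      |F i y - Ft Δ i y| ≤ κF * Δ ^ 2 ∧
      ‖gradient (F i) y - gradient (Ft Δ i) y‖ ≤ κG * Δ) :
    ∃ κf > (0:ℝ), ∃ Δf > (0:ℝ), ∀ Δ ∈ Ioo (0:ℝ) Δf, ∀ y ∈ ball xbar Δ,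
      g (WithLp.toLp 2 (fun i => F i y) : EuclideanSpace ℝ (Fin m)) ≠ ⊤ ∧
      g (WithLp.toLp 2 (fun i => Ft Δ i y) : EuclideanSpace ℝ (Fin m)) ≠ ⊤ ∧
      |(g (WithLp.toLp 2 (fun i => F i y) : EuclideanSpace ℝ (Fin m))).toReal -
        (g (WithLp.toLp 2 (fun i => Ft Δ i y) : EuclideanSpace ℝ (Fin m))).toReal| ≤ κf * Δ ^ 2 := by
  obtain ⟨K, ε, hε, hball, hlip⟩ :=
    (convexOn_toReal_of_convex_epigraph hgbot hconv).locallyLipschitzOn_interior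
      |>.exists_lipschitzOnWith_ball isOpen_interior hdom
  have hclose : ∀ᶠ Δ in 𝓝[>] 0, ∀ y ∈ ball xbar Δ,
      dist (WithLp.toLp 2 (fun i => F i y) : EuclideanSpace ℝ (Fin m))
        (WithLp.toLp 2 (fun i => Ft Δ i y)) ≤ √m * κF * Δ ^ 2 := by
    filter_upwards [Ioo_mem_nhdsGT hΔbar] with Δ hΔ y hy
    simpa [mul_assoc] using EuclideanSpace.dist_le_sqrt_card_mul (by positivity)
      fun i => ((Real.dist_eq _ _).trans_le (hfl Δ hΔ i y hy).1)
  have hΦ : ContinuousAt (fun y => (WithLp.toLp 2 (fun i => F i y) : EuclideanSpace ℝ (Fin m)))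
      xbar :=
    ((PiLp.continuous_toLp 2 _).comp (continuous_pi fun i => (hF i).continuous)).continuousAt
  refine ⟨K * (√m * κF) + 1, by positivity, (nhdsGT_basis 0).eventually_iff.1 ?_⟩
  filter_upwards [hclose, eventually_mem_ball_of_dist_le_mul_sq hΦ hε hclose]
    with Δ hcloseΔ hmaps y hy
  obtain ⟨hFy, hFty⟩ := hmaps y hy
  refine ⟨(interior_subset (hball hFy)).ne, (interior_subset (hball hFty)).ne, ?_⟩
  calc _ = dist _ _ := (Real.dist_eq _ _).symm
    _ ≤ K * dist _ _ := hlip.dist_le_mul _ hFy _ hFty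
    _ ≤ K * (√m * κF * Δ ^ 2) := by gcongr; exact hcloseΔ y hy
    _ ≤ (K * (√m * κF) + 1) * Δ ^ 2 := by nlinarith [sq_nonneg Δ]

/-- **Function value approximations** (Theorem 3.1). If `g` is convex lsc (epigraph convex and
closed), `F` has `C¹` components, `F x̄` lies in the interior of the domain of `g`, and
`F̃_Δ` are fully linear models of `F` at `x̄` with constants `κF, κG`, then setting
`f = g ∘ F` and `f̃_Δ = g ∘ F̃_Δ`, there exist `κf > 0` and `Δ̄_f > 0` such that for all
`Δ ∈ (0, Δ̄_f)` and `y ∈ B_Δ(x̄)`, both values are finite and `|f(y) − f̃_Δ(y)| ≤ κf Δ²`. -/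
theorem function_value_approximation {n m : ℕ}
    (g : EuclideanSpace ℝ (Fin m) → EReal)
    (hgbot : ∀ z, g z ≠ ⊥)
    (hconv : Convex ℝ {p : EuclideanSpace ℝ (Fin m) × ℝ | g p.1 ≤ (p.2 : EReal)})
    (hlsc : IsClosed {p : EuclideanSpace ℝ (Fin m) × ℝ | g p.1 ≤ (p.2 : EReal)})
    (F : Fin m → EuclideanSpace ℝ (Fin n) → ℝ)
    (hF : ∀ i, ContDiff ℝ 1 (F i))
    (xbar : EuclideanSpace ℝ (Fin n))
    (hdom : (WithLp.toLp 2 (fun i => F i xbar) : EuclideanSpace ℝ (Fin m)) ∈ interior {z | g z < ⊤})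
    (Δbar κF κG : ℝ) (hΔbar : 0 < Δbar) (hκF : 0 < κF) (hκG : 0 < κG)
    (Ft : ℝ → Fin m → EuclideanSpace ℝ (Fin n) → ℝ)
    (hFtC1 : ∀ Δ ∈ Ioo (0:ℝ) Δbar, ∀ i, ContDiff ℝ 1 (Ft Δ i))
    (hfl : ∀ Δ ∈ Ioo (0:ℝ) Δbar, ∀ i, ∀ y ∈ ball xbar Δ,
      |F i y - Ft Δ i y| ≤ κF * Δ ^ 2 ∧
      ‖gradient (F i) y - gradient (Ft Δ i) y‖ ≤ κG * Δ) :
    ∃ κf > (0:ℝ), ∃ Δf > (0:ℝ), ∀ Δ ∈ Ioo (0:ℝ) Δf, ∀ y ∈ ball xbar Δ,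
      g (WithLp.toLp 2 (fun i => F i y) : EuclideanSpace ℝ (Fin m)) ≠ ⊤ ∧
      g (WithLp.toLp 2 (fun i => Ft Δ i y) : EuclideanSpace ℝ (Fin m)) ≠ ⊤ ∧
      |(g (WithLp.toLp 2 (fun i => F i y) : EuclideanSpace ℝ (Fin m))).toReal -
        (g (WithLp.toLp 2 (fun i => Ft Δ i y) : EuclideanSpace ℝ (Fin m))).toReal| ≤ κf * Δ ^ 2 :=
  function_value_approximation_general g hgbot hconv F hF xbar hdom Δbar κF κG hΔbar hκF Ft hfl
end

section
/- Define g : ℝ² → ℝ ∪ {+∞} by g(z) = 0 if z₁ ≥ 0 and g(z) = +∞ otherwise, define F : ℝ² → ℝ² by F(x) = (x₁, x₂), and for Δ ∈ (0,1) define F̃_Δ(x) = (x₁ − Δ², x₂). Then: (i) g is convex and lower semicontinuous; (ii) {F̃_Δ : Δ ∈ (0,1)} are fully linear models of F at x̄ = (0,0) with constants κ_F = 1 and κ_G = 1; (iii) F(0,0) ∉ int(dom g); and (iv) for every Δ ∈ (0,1), g(F(0,0)) = 0 while g(F̃_Δ(0,0)) = +∞, so |g(F(0,0)) − g(F̃_Δ(0,0))|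 is infinite and no bound of the form |g(F(y)) − g(F̃_Δ(y))| ≤ κ_f Δ² can hold at y = (0,0). -/
open Metric Set

/-- The indicator-type function `g(z) = 0` if `z₁ ≥ 0`, `+∞` otherwise. -/
noncomputable def g5 (z : EuclideanSpace ℝ (Fin 2)) : EReal :=
  if 0 ≤ z 0 then 0 else ⊤

/-- The identity map `F(x) = (x₁, x₂)`, given by components. -/
def F5 (i : Fin 2) (x : EuclideanSpace ℝ (Fin 2)) : ℝ := x i

/-- The shifted models `F̃_Δ(x) = (x₁ − Δ², x₂)`, given by components. -/
noncomputable def Ft5 (Δ : ℝ) (i : Fin 2) (x : EuclideanSpace ℝ (Fin 2)) : ℝ :=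
  if i = 0 then x 0 - Δ ^ 2 else x 1

lemma epigraph_g5 : {p : EuclideanSpace ℝ (Fin 2) × ℝ | g5 p.1 ≤ (p.2 : EReal)} =
    {p | 0 ≤ p.1 0 ∧ 0 ≤ p.2} := by
  ext p
  by_cases h : 0 ≤ p.1 0 <;> simp [g5, h, ← EReal.coe_zero, EReal.coe_le_coe_iff]

lemma dom_g5 : {z | g5 z < ⊤} = {z : EuclideanSpace ℝ (Fin 2) | 0 ≤ z 0} := by
  ext z
  by_cases h : 0 ≤ z 0 <;> simp [g5, h]

lemma convex_epigraph_g5 :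
    Convex ℝ {p : EuclideanSpace ℝ (Fin 2) × ℝ | g5 p.1 ≤ (p.2 : EReal)} := by
  rw [epigraph_g5]
  intro p hp q hq a b ha hb _
  exact ⟨add_nonneg (mul_nonneg ha hp.1) (mul_nonneg hb hq.1),
    add_nonneg (mul_nonneg ha hp.2) (mul_nonneg hb hq.2)⟩

lemma isClosed_epigraph_g5 :
    IsClosed {p : EuclideanSpace ℝ (Fin 2) × ℝ | g5 p.1 ≤ (p.2 : EReal)} := by
  rw [epigraph_g5]
  exact (isClosed_le continuous_const
    ((EuclideanSpace.proj (0 : Fin 2)).continuous.comp continuous_fst)).inter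
    (isClosed_le continuous_const continuous_snd)

lemma contDiff_F5 (i : Fin 2) : ContDiff ℝ 1 (F5 i) :=
  (EuclideanSpace.proj (𝕜 := ℝ) i).contDiff

lemma Ft5_eq_F5_sub (Δ : ℝ) (i : Fin 2) :
    Ft5 Δ i = fun x => F5 i x - if i = 0 then Δ ^ 2 else 0 := by
  funext x
  fin_cases i <;> simp [Ft5, F5]

lemma contDiff_Ft5 (Δ : ℝ) (i : Fin 2) : ContDiff ℝ 1 (Ft5 Δ i) := by
  rw [Ft5_eq_F5_sub]
  exact (contDiff_F5 i).sub contDiff_const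

lemma abs_F5_sub_Ft5_le (Δ : ℝ) (i : Fin 2) (y : EuclideanSpace ℝ (Fin 2)) :
    |F5 i y - Ft5 Δ i y| ≤ Δ ^ 2 := by
  rw [Ft5_eq_F5_sub]
  split_ifs <;> simp [sq_nonneg]

lemma gradient_Ft5 (Δ : ℝ) (i : Fin 2) : gradient (Ft5 Δ i) = gradient (F5 i) := by
  funext y
  simp only [gradient, Ft5_eq_F5_sub, fderiv_sub_const]

lemma Ft5_zero_apply_zero (Δ : ℝ) : Ft5 Δ 0 0 = -Δ ^ 2 := by
  simp [Ft5]

/-- **Example 3.3** (importance of `F(x̄) ∈ int(dom g)` for function values):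
(i) `g5` is convex lsc; (ii) the `Ft5 Δ` are fully linear models of `F5` at `x̄ = (0,0)` with
constants `κF = κG = 1` on `(0,1)`; (iii) `F(0,0) ∉ int(dom g)`; and (iv) `g(F(0,0)) = 0` while
`g(F̃_Δ(0,0)) = +∞`, so no bound `|g(F(y)) − g(F̃_Δ(y))| ≤ κf Δ²` can hold at `y = (0,0)`. -/
theorem example_importance_of_interior_function_values :
    -- (i) convex and lower semicontinuous
    (Convex ℝ {p : EuclideanSpace ℝ (Fin 2) × ℝ | g5 p.1 ≤ (p.2 : EReal)} ∧
      IsClosed {p : EuclideanSpace ℝ (Fin 2) × ℝ | g5 p.1 ≤ (p.2 : EReal)}) ∧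
    -- (ii) fully linear models at x̄ = 0 with κF = 1, κG = 1, Δ̄ = 1
    ((∀ i, ContDiff ℝ 1 (F5 i)) ∧
      ∀ Δ ∈ Ioo (0:ℝ) 1, (∀ i, ContDiff ℝ 1 (Ft5 Δ i)) ∧
        ∀ i, ∀ y ∈ ball (0 : EuclideanSpace ℝ (Fin 2)) Δ,
          |F5 i y - Ft5 Δ i y| ≤ 1 * Δ ^ 2 ∧
          ‖gradient (F5 i) y - gradient (Ft5 Δ i) y‖ ≤ 1 * Δ) ∧
    -- (iii) F(0,0) ∉ int(dom g)
    (WithLp.toLp 2 (fun i => F5 i 0) : EuclideanSpace ℝ (Fin 2)) ∉ interior {z | g5 z < ⊤} ∧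
    -- (iv) the composition error is infinite at (0,0)
    ∀ Δ ∈ Ioo (0:ℝ) 1,
      g5 (WithLp.toLp 2 (fun i => F5 i 0) : EuclideanSpace ℝ (Fin 2)) = 0 ∧
      g5 (WithLp.toLp 2 (fun i => Ft5 Δ i 0) : EuclideanSpace ℝ (Fin 2)) = ⊤ := by
  refine ⟨⟨convex_epigraph_g5, isClosed_epigraph_g5⟩,
    ⟨contDiff_F5, fun Δ hΔ => ⟨contDiff_Ft5 Δ, fun i y _ => ⟨?_, ?_⟩⟩⟩, ?_, fun Δ hΔ => ⟨?_, ?_⟩⟩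
  · simpa using abs_F5_sub_Ft5_le Δ i y
  · simpa [gradient_Ft5] using hΔ.1.le
  · simp [F5, dom_g5, interior_halfSpace]
  · simp [g5, F5]
  · have hneg : ¬ 0 ≤ -Δ ^ 2 := by nlinarith [hΔ.1]
    simp [g5, Ft5_zero_apply_zero, hneg]
end

section
/- Let g : ℝᵐ → ℝ ∪ {+∞} be convex and lower semicontinuous, let F : ℝⁿ → ℝᵐ have continuously differentiable components, let x̄ ∈ ℝⁿ satisfy F(x̄) ∈ int(dom g), let Δ̄ > 0, let {F̃_Δ : Δ ∈ (0, Δ̄)} be fully linear models of F at x̄ with constants κ_F > 0 and κ_G > 0, and suppose F̃_Δ(x̄) = F(x̄) for all Δ ∈ (0, Δ̄). Let M = sup{‖w‖ : w ∈ ∂g(F(x̄))} (finite since F(x̄) ∈ int(dom g)). Then for every Δ ∈ (0, Δ̄) and every v ∈ ∇F(x̄)ᵀ ∂g(F(x̄)) there exists ṽ ∈ ∇F̃_Δ(x̄)ᵀ ∂g(F(x̄)) such that ‖v − ṽ‖ ≤ M √m κ_G Δ. (By the convex chain rule, ∇F(x̄)ᵀ ∂g(F(x̄)) = ∂(g∘F)(x̄)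 and ∇F̃_Δ(x̄)ᵀ ∂g(F(x̄)) = ∂(g∘F̃_Δ)(x̄).) -/
/-!
The approximating subgradient uses the same multiplier: `v = ∇F(x̄)ᵀ w` with `w ∈ ∂g(F(x̄))` is
matched by `ṽ = ∇F̃_Δ(x̄)ᵀ w`, so `v − ṽ = Σᵢ wᵢ (∇Fᵢ(x̄) − ∇F̃ᵢ,Δ(x̄))`. Each gradient error is at
most `κG Δ`, and Cauchy–Schwarz bounds `Σᵢ |wᵢ|` by `√m ‖w‖ ≤ √m M`. The bound `‖w‖ ≤ M` needs
`∂g(F(x̄))` to be bounded (otherwise `sSup` is a junk `0`); this comes from `F(x̄) ∈ int(dom g)`: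
the subgradient inequality at the finitely many points `F(x̄) ± r eᵢ` bounds every coordinate.
-/

open Metric Set

/-- The (convex) subdifferential of an extended-real-valued function `g` at `z̄`:
`∂g(z̄) = {w : g(z) ≥ g(z̄) + ⟨w, z − z̄⟩ for all z}`. -/
def ERealSubdiff {m : ℕ} (g : EuclideanSpace ℝ (Fin m) → EReal)
    (zbar : EuclideanSpace ℝ (Fin m)) : Set (EuclideanSpace ℝ (Fin m)) :=
  {w | ∀ z, g zbar + ((inner ℝ w (z - zbar) : ℝ) : EReal) ≤ g z}

section Subdifferential

variable {m : ℕ} {g : EuclideanSpace ℝ (Fin m) → EReal} {zbar : EuclideanSpace ℝ (Fin m)}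

lemma inner_sub_le_of_mem_ERealSubdiff {w z : EuclideanSpace ℝ (Fin m)} {a b : ℝ}
    (hw : w ∈ ERealSubdiff g zbar) (ha : g zbar = a) (hb : g z = b) :
    inner ℝ w (z - zbar) ≤ b - a := by
  have h := hw z
  rw [ha, hb] at h
  have h' : a + inner ℝ w (z - zbar) ≤ b := by exact_mod_cast h
  linarith

lemma exists_abs_apply_le_of_mem_ERealSubdiff (hgbot : ∀ z, g z ≠ ⊥)
    (hdom : zbar ∈ interior {z | g z < ⊤}) (i : Fin m) :
    ∃ C, ∀ w ∈ ERealSubdiff g zbar, |w i| ≤ C := by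
  obtain ⟨r, hr, hball⟩ :=
    nhds_basis_closedBall.mem_iff.1 (mem_interior_iff_mem_nhds.1 hdom)
  have hfin : ∀ z ∈ closedBall zbar r, g z = (g z).toReal := fun z hz =>
    (EReal.coe_toReal (hball hz).ne (hgbot z)).symm
  set e : EuclideanSpace ℝ (Fin m) := r • EuclideanSpace.single i 1
  have he : ‖e‖ = r := by simp [e, norm_smul, hr.le]
  have hinner : ∀ w : EuclideanSpace ℝ (Fin m), inner ℝ w e = r * w i := fun w => by
    simp [e, real_inner_smul_right, EuclideanSpace.inner_single_right]
  have hplus : zbar + e ∈ closedBall zbar r := by simp [he]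
  have hminus : zbar - e ∈ closedBall zbar r := by simp [he]
  have hzbar := hfin zbar (mem_closedBall_self hr.le)
  refine ⟨max ((g (zbar + e)).toReal - (g zbar).toReal)
      ((g (zbar - e)).toReal - (g zbar).toReal) / r, fun w hw => ?_⟩
  have h₁ := inner_sub_le_of_mem_ERealSubdiff hw hzbar (hfin _ hplus)
  have h₂ := inner_sub_le_of_mem_ERealSubdiff hw hzbar (hfin _ hminus)
  rw [add_sub_cancel_left, hinner] at h₁
  rw [sub_sub_cancel_left, inner_neg_right, hinner] at h₂
  rw [le_div_iff₀ hr]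
  rcases abs_choice (w i) with h | h <;> rw [h]
  exacts [le_max_of_le_left (by linarith), le_max_of_le_right (by linarith)]

lemma bddAbove_norm_image_ERealSubdiff (hgbot : ∀ z, g z ≠ ⊥)
    (hdom : zbar ∈ interior {z | g z < ⊤}) :
    BddAbove ((‖·‖) '' ERealSubdiff g zbar) := by
  choose C hC using exists_abs_apply_le_of_mem_ERealSubdiff hgbot hdom
  refine ⟨√(∑ i, C i ^ 2), ?_⟩
  rintro _ ⟨w, hw, rfl⟩
  dsimp only
  rw [EuclideanSpace.norm_eq]
  gcongr with i
  rw [Real.norm_eq_abs]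
  exact hC i w hw

end Subdifferential

lemma norm_sum_smul_le_norm_mul_sqrt_card_mul {ι E : Type*} [Fintype ι]
    [SeminormedAddCommGroup E] [NormedSpace ℝ E] (w : EuclideanSpace ℝ ι) (u : ι → E) {c : ℝ}
    (hu : ∀ i, ‖u i‖ ≤ c) (hc : 0 ≤ c) :
    ‖∑ i, w i • u i‖ ≤ ‖w‖ * √(Fintype.card ι) * c := by
  calc ‖∑ i, w i • u i‖
      ≤ ∑ i, ‖w i‖ * c := by
        refine (norm_sum_le _ _).trans (Finset.sum_le_sum fun i _ => ?_)
        rw [norm_smul]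
        exact mul_le_mul_of_nonneg_left (hu i) (norm_nonneg _)
    _ = (∑ i, ‖w i‖ * 1) * c := by simp [Finset.sum_mul]
    _ ≤ (√(∑ i, ‖w i‖ ^ 2) * √(∑ _i : ι, (1 : ℝ) ^ 2)) * c := by
        gcongr
        exact Real.sum_mul_le_sqrt_mul_sqrt _ _ _
    _ = ‖w‖ * √(Fintype.card ι) * c := by simp [EuclideanSpace.norm_eq]

theorem subdifferential_approximation_fwd_general {n m : ℕ}
    (g : EuclideanSpace ℝ (Fin m) → EReal)
    (hgbot : ∀ z, g z ≠ ⊥)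
    (F : Fin m → EuclideanSpace ℝ (Fin n) → ℝ)
    (xbar : EuclideanSpace ℝ (Fin n))
    (hdom : (WithLp.toLp 2 (fun i => F i xbar) : EuclideanSpace ℝ (Fin m)) ∈ interior {z | g z < ⊤})
    (Δbar κF κG : ℝ) (hκG : 0 < κG)
    (Ft : ℝ → Fin m → EuclideanSpace ℝ (Fin n) → ℝ)
    (hfl : ∀ Δ ∈ Ioo (0:ℝ) Δbar, ∀ i, ∀ y ∈ ball xbar Δ,
      |F i y - Ft Δ i y| ≤ κF * Δ ^ 2 ∧
      ‖gradient (F i) y - gradient (Ft Δ i) y‖ ≤ κG * Δ)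
    (M : ℝ)
    (hM : M = sSup ((fun w => ‖w‖) ''
      ERealSubdiff g (WithLp.toLp 2 (fun i => F i xbar) : EuclideanSpace ℝ (Fin m)))) :
    ∀ Δ ∈ Ioo (0:ℝ) Δbar,
      ∀ v ∈ (fun w : EuclideanSpace ℝ (Fin m) => ∑ i, w i • gradient (F i) xbar) ''
        ERealSubdiff g (WithLp.toLp 2 (fun i => F i xbar) : EuclideanSpace ℝ (Fin m)),
      ∃ vt ∈ (fun w : EuclideanSpace ℝ (Fin m) => ∑ i, w i • gradient (Ft Δ i) xbar) ''
        ERealSubdiff g (WithLp.toLp 2 (fun i => F i xbar) : EuclideanSpace ℝ (Fin m)),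
      ‖v - vt‖ ≤ M * Real.sqrt m * κG * Δ := by
  rintro Δ hΔ _ ⟨w, hw, rfl⟩
  refine ⟨_, ⟨w, hw, rfl⟩, ?_⟩
  have hwM : ‖w‖ ≤ M :=
    hM ▸ le_csSup (bddAbove_norm_image_ERealSubdiff hgbot hdom) ⟨w, hw, rfl⟩
  have hgrad i : ‖gradient (F i) xbar - gradient (Ft Δ i) xbar‖ ≤ κG * Δ :=
    (hfl Δ hΔ i xbar (mem_ball_self hΔ.1)).2
  have hκΔ : 0 ≤ κG * Δ := mul_nonneg hκG.le hΔ.1.le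
  rw [← Finset.sum_sub_distrib]
  simp_rw [← smul_sub]
  calc _ ≤ ‖w‖ * √(Fintype.card (Fin m)) * (κG * Δ) :=
        norm_sum_smul_le_norm_mul_sqrt_card_mul w _ hgrad hκΔ
    _ ≤ M * √m * (κG * Δ) := by
        rw [Fintype.card_fin]
        gcongr
    _ = M * √m * κG * Δ := by ring

/-- **Subdifferential approximations** (Theorem 4.1, part 1). Under the assumptions that `g` is
convex lsc, `F(x̄) ∈ int(dom g)`, `F̃_Δ` are fully linear models of `F` at `x̄` with constants
`κF, κG`, and `F̃_Δ(x̄) = F(x̄)`, with `M = sup{‖w‖ : w ∈ ∂g(F(x̄))}`: for every `Δ ∈ (0, Δ̄)`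
and every `v ∈ ∇F(x̄)ᵀ ∂g(F(x̄))` there exists `ṽ ∈ ∇F̃_Δ(x̄)ᵀ ∂g(F(x̄))` with
`‖v − ṽ‖ ≤ M √m κG Δ`. -/
theorem subdifferential_approximation_fwd {n m : ℕ}
    (g : EuclideanSpace ℝ (Fin m) → EReal)
    (hgbot : ∀ z, g z ≠ ⊥)
    (hconv : Convex ℝ {p : EuclideanSpace ℝ (Fin m) × ℝ | g p.1 ≤ (p.2 : EReal)})
    (hlsc : IsClosed {p : EuclideanSpace ℝ (Fin m) × ℝ | g p.1 ≤ (p.2 : EReal)})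
    (F : Fin m → EuclideanSpace ℝ (Fin n) → ℝ)
    (hF : ∀ i, ContDiff ℝ 1 (F i))
    (xbar : EuclideanSpace ℝ (Fin n))
    (hdom : (WithLp.toLp 2 (fun i => F i xbar) : EuclideanSpace ℝ (Fin m)) ∈ interior {z | g z < ⊤})
    (Δbar κF κG : ℝ) (hΔbar : 0 < Δbar) (hκF : 0 < κF) (hκG : 0 < κG)
    (Ft : ℝ → Fin m → EuclideanSpace ℝ (Fin n) → ℝ)
    (hFtC1 : ∀ Δ ∈ Ioo (0:ℝ) Δbar, ∀ i, ContDiff ℝ 1 (Ft Δ i))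
    (hfl : ∀ Δ ∈ Ioo (0:ℝ) Δbar, ∀ i, ∀ y ∈ ball xbar Δ,
      |F i y - Ft Δ i y| ≤ κF * Δ ^ 2 ∧
      ‖gradient (F i) y - gradient (Ft Δ i) y‖ ≤ κG * Δ)
    (hcenter : ∀ Δ ∈ Ioo (0:ℝ) Δbar, ∀ i, Ft Δ i xbar = F i xbar)
    (M : ℝ)
    (hM : M = sSup ((fun w => ‖w‖) ''
      ERealSubdiff g (WithLp.toLp 2 (fun i => F i xbar) : EuclideanSpace ℝ (Fin m)))) :
    ∀ Δ ∈ Ioo (0:ℝ) Δbar,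
      ∀ v ∈ (fun w : EuclideanSpace ℝ (Fin m) => ∑ i, w i • gradient (F i) xbar) ''
        ERealSubdiff g (WithLp.toLp 2 (fun i => F i xbar) : EuclideanSpace ℝ (Fin m)),
      ∃ vt ∈ (fun w : EuclideanSpace ℝ (Fin m) => ∑ i, w i • gradient (Ft Δ i) xbar) ''
        ERealSubdiff g (WithLp.toLp 2 (fun i => F i xbar) : EuclideanSpace ℝ (Fin m)),
      ‖v - vt‖ ≤ M * Real.sqrt m * κG * Δ :=
  subdifferential_approximation_fwd_general g hgbot F xbar hdom Δbar κF κG hκG Ft hfl M hM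
end
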